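/- arXiv:1406.5919 — 4 statements merged into one kernel-verified Lean document; each statement's English description precedes it below -/
import Mathlib

section
/- Let Ω ⊆ ℝⁿ be open, convex and bounded and let f : Ω → ℝ be Lipschitz. For ρ > 0, f admits a ρ-proximal subgradient at every point of Ω (with the same constant ρ at all points) if and only if the function g(x) = f(x) + (ρ/2)|x|² is convex on Ω. -/
open scoped RealInnerProductSpace

/-- A function with a local subgradient at every point of an open convex set is convex there. -/
lemma localsub_convexOn {E : Type*} [NormedAddCommGroup E] [InnerProductSpace ℝ E]
    {Ω : Set E} (hΩo : IsOpen Ω) (hΩc : Convex ℝ Ω) {g : E → ℝ} (hg : ContinuousOn g Ω)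
    (h : ∀ z ∈ Ω, ∃ w : E, ∃ O ∈ nhds z, ∀ x ∈ O ∩ Ω, g x ≥ g z + ⟪w, x - z⟫) :
    ConvexOn ℝ Ω g := by
  refine ⟨hΩc, ?_⟩
  intro x hx y hy a b ha hb hab
  -- reduce to a one-dimensional statement along the segment
  set γ : ℝ → E := fun t => x + t • (y - x) with hγ
  have hγcont : Continuous γ := by continuity
  have hγmem : ∀ t ∈ Set.Icc (0:ℝ) 1, γ t ∈ Ω := by
    intro t ht
    have : (1 - t) • x + t • y ∈ Ω := hΩc hx hy (by linarith [ht.2]) ht.1 (by ring)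
    convert this using 1
    simp only [hγ, smul_sub, sub_smul, one_smul]
    abel
  set ψ : ℝ → ℝ := fun t => g (γ t) - ((1 - t) * g x + t * g y) with hψ
  have hψ0 : ψ 0 = 0 := by simp [hψ, hγ]
  have hψ1 : ψ 1 = 0 := by simp [hψ, hγ]
  have hψcont : ContinuousOn ψ (Set.Icc 0 1) := by
    apply ContinuousOn.sub
    · exact hg.comp hγcont.continuousOn hγmem
    · fun_prop
  -- main claim: ψ ≤ 0 on [0,1]
  have main : ∀ t ∈ Set.Icc (0:ℝ) 1, ψ t ≤ 0 := by
    by_contra hcon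
    push_neg at hcon
    obtain ⟨t₁, ht₁, ht₁pos⟩ := hcon
    obtain ⟨tm, htm, htmax⟩ := (isCompact_Icc (a := (0:ℝ)) (b := 1)).exists_isMaxOn
      (Set.nonempty_Icc.2 zero_le_one) hψcont
    set M := ψ tm with hM
    have hMpos : 0 < M := lt_of_lt_of_le ht₁pos (htmax ht₁)
    have hMmax : ∀ s ∈ Set.Icc (0:ℝ) 1, ψ s ≤ M := fun s hs => htmax hs
    -- the set where the max is attained
    set T : Set ℝ := {t ∈ Set.Icc (0:ℝ) 1 | ψ t = M} with hT
    have hTclosed : IsClosed T := by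
      have : T = Set.Icc (0:ℝ) 1 ∩ ψ ⁻¹' {M} := by
        ext t; simp [hT, Set.mem_setOf_eq, and_comm]
      rw [this]
      exact hψcont.preimage_isClosed_of_isClosed isClosed_Icc isClosed_singleton
    have hTne : T.Nonempty := ⟨tm, htm, rfl⟩
    have hTbdd : BddBelow T := ⟨0, fun t ht => ht.1.1⟩
    set t₀ := sInf T with ht₀
    have ht₀T : t₀ ∈ T := hTclosed.csInf_mem hTne hTbdd
    have ht₀Icc : t₀ ∈ Set.Icc (0:ℝ) 1 := ht₀T.1
    have ht₀M : ψ t₀ = M := ht₀T.2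
    have ht₀0 : t₀ ≠ 0 := by intro h0; rw [h0] at ht₀M; rw [hψ0] at ht₀M; linarith
    have ht₀1 : t₀ ≠ 1 := by intro h1; rw [h1] at ht₀M; rw [hψ1] at ht₀M; linarith
    have ht₀Ioo : t₀ ∈ Set.Ioo (0:ℝ) 1 :=
      ⟨lt_of_le_of_ne ht₀Icc.1 (Ne.symm ht₀0), lt_of_le_of_ne ht₀Icc.2 ht₀1⟩
    -- local subgradient at γ t₀
    have hzΩ : γ t₀ ∈ Ω := hγmem t₀ ht₀Icc
    obtain ⟨w, O, hO, hsub⟩ := h (γ t₀) hzΩ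
    -- find δ > 0 with (t₀-δ, t₀+δ) ⊆ Ioo 0 1 and γ of it in O
    have hnhds : γ ⁻¹' O ∩ Set.Ioo 0 1 ∈ nhds t₀ := by
      refine Filter.inter_mem ?_ (isOpen_Ioo.mem_nhds ht₀Ioo)
      exact hγcont.continuousAt.preimage_mem_nhds hO
    obtain ⟨δ, hδpos, hδ⟩ := Metric.mem_nhds_iff.1 hnhds
    set c : ℝ := ⟪w, y - x⟫ + g x - g y with hc
    have key : ∀ s : ℝ, |s - t₀| < δ → ψ s ≥ M + (s - t₀) * c := by
      intro s hs
      have hsmem : s ∈ γ ⁻¹' O ∩ Set.Ioo 0 1 := hδ (by simpa [Real.dist_eq] using hs)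
      have hsIcc : s ∈ Set.Icc (0:ℝ) 1 := Set.Ioo_subset_Icc_self hsmem.2
      have hγs : γ s ∈ O ∩ Ω := ⟨hsmem.1, hγmem s hsIcc⟩
      have hineq := hsub (γ s) hγs
      have hdiff : γ s - γ t₀ = (s - t₀) • (y - x) := by
        simp only [hγ, sub_smul]
        abel
      rw [hdiff, real_inner_smul_right] at hineq
      have : ψ s - ψ t₀ ≥ (s - t₀) * c := by
        simp only [hψ, hc]
        nlinarith [hineq]
      linarith [ht₀M, this]
    -- from s = t₀ + δ/2 : c ≤ 0
    have hcle : c ≤ 0 := by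
      have h1 := key (t₀ + δ/2) (by
        rw [show t₀ + δ/2 - t₀ = δ/2 by ring, abs_of_nonneg (by linarith)]; linarith)
      have h2mem : t₀ + δ/2 ∈ γ ⁻¹' O ∩ Set.Ioo 0 1 := hδ (by
        simp only [Metric.mem_ball, Real.dist_eq]
        rw [show t₀ + δ/2 - t₀ = δ/2 by ring, abs_of_nonneg (by linarith)]; linarith)
      have h2 : ψ (t₀ + δ/2) ≤ M := hMmax _ (Set.Ioo_subset_Icc_self h2mem.2)
      nlinarith
    -- from s = t₀ - δ/2 : contradiction with minimality
    have h3 := key (t₀ - δ/2) (by rw [show t₀ - δ/2 - t₀ = -(δ/2) by ring, abs_neg,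
      abs_of_nonneg (by linarith)]; linarith)
    have hsm : t₀ - δ/2 ∈ γ ⁻¹' O ∩ Set.Ioo 0 1 := hδ (by
      simp only [Metric.mem_ball, Real.dist_eq]
      rw [show t₀ - δ/2 - t₀ = -(δ/2) by ring, abs_neg, abs_of_nonneg (by linarith)]; linarith)
    have hsIcc : t₀ - δ/2 ∈ Set.Icc (0:ℝ) 1 := Set.Ioo_subset_Icc_self hsm.2
    have h4 : ψ (t₀ - δ/2) ≤ M := hMmax _ hsIcc
    have h5 : ψ (t₀ - δ/2) = M := by nlinarith
    have : t₀ ≤ t₀ - δ/2 := csInf_le hTbdd ⟨hsIcc, h5⟩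
    linarith
  -- conclude
  have hb1 : b ∈ Set.Icc (0:ℝ) 1 := ⟨hb, by linarith⟩
  have := main b hb1
  have hpt : γ b = a • x + b • y := by
    simp only [hγ, smul_sub]
    rw [show a = 1 - b by linarith]
    simp only [sub_smul, one_smul]
    abel
  simp only [hψ] at this
  rw [hpt] at this
  rw [show a = 1 - b by linarith] at this ⊢
  simp only [smul_eq_mul]
  linarith [this]

/-- A continuous convex function on an open convex set has a subgradient at each point. -/
lemma convexOn_exists_subgradient {E : Type*} [NormedAddCommGroup E] [InnerProductSpace ℝ E]
    [CompleteSpace E] {Ω : Set E} (hΩo : IsOpen Ω) {g : E → ℝ} (hg : ContinuousOn g Ω)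
    (hconv : ConvexOn ℝ Ω g) {x₀ : E} (hx₀ : x₀ ∈ Ω) :
    ∃ v : E, ∀ x ∈ Ω, g x ≥ g x₀ + ⟪v, x - x₀⟫ := by
  -- strict epigraph
  set s : Set (E × ℝ) := {p | p.1 ∈ Ω ∧ g p.1 < p.2} with hs
  have hsconv : Convex ℝ s := by
    rintro ⟨p1, p2⟩ ⟨hp1, hp2⟩ ⟨q1, q2⟩ ⟨hq1, hq2⟩ a b ha hb hab
    refine ⟨hconv.1 hp1 hq1 ha hb hab, ?_⟩
    have h1 : g (a • p1 + b • q1) ≤ a * g p1 + b * g q1 := hconv.2 hp1 hq1 ha hb hab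
    rcases eq_or_lt_of_le ha with ha0 | ha0
    · have hb1 : b = 1 := by linarith
      simp only [← ha0, hb1, Prod.smul_mk, Prod.mk_add_mk, smul_eq_mul] at *
      simp only [zero_smul, one_smul, zero_add] at *
      linarith
    · have : a * g p1 + b * g q1 < a * p2 + b * q2 := by
        have h2 : a * g p1 < a * p2 := by exact (mul_lt_mul_iff_right₀ ha0).2 hp2
        have h3 : b * g q1 ≤ b * q2 := mul_le_mul_of_nonneg_left hq2.le hb
        linarith
      calc g ((a • (p1, p2) + b • (q1, q2)).1) = g (a • p1 + b • q1) := by rfl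
        _ ≤ a * g p1 + b * g q1 := h1
        _ < a * p2 + b * q2 := this
        _ = (a • (p1, p2) + b • (q1, q2)).2 := by rfl
  have hsopen : IsOpen s := by
    rw [Metric.isOpen_iff]
    rintro ⟨p1, p2⟩ ⟨hp1, hp2⟩
    have hcont : ContinuousAt g p1 := hg.continuousAt (hΩo.mem_nhds hp1)
    set ε' := (p2 - g p1) / 2 with hε'
    have hε'pos : 0 < ε' := by simp only [hε']; linarith
    obtain ⟨δ1, hδ1pos, hδ1⟩ := Metric.continuousAt_iff.1 hcont ε' hε'pos
    obtain ⟨δ2, hδ2pos, hδ2⟩ := Metric.isOpen_iff.1 hΩo p1 hp1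
    refine ⟨min (min δ1 δ2) ε', by positivity, ?_⟩
    rintro ⟨q1, q2⟩ hq
    rw [Metric.mem_ball, Prod.dist_eq] at hq
    have hd1 : dist q1 p1 < min (min δ1 δ2) ε' := (le_max_left _ _).trans_lt hq
    have hd2 : dist q2 p2 < ε' := ((le_max_right _ _).trans_lt hq).trans_le (min_le_right _ _)
    have hq1Ω : q1 ∈ Ω := hδ2 (Metric.mem_ball.2 (hd1.trans_le
      ((min_le_left _ _).trans (min_le_right _ _))))
    have hgq1 : g q1 < g p1 + ε' := by
      have := hδ1 (show dist q1 p1 < δ1 from hd1.trans_le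
        ((min_le_left _ _).trans (min_le_left _ _)))
      rw [Real.dist_eq, abs_sub_lt_iff] at this
      linarith [this.1]
    have hq2 : p2 - ε' < q2 := by
      rw [Real.dist_eq, abs_sub_lt_iff] at hd2
      linarith [hd2.2]
    exact ⟨hq1Ω, by simp only [hε'] at *; linarith⟩
  -- separate the point (x₀, g x₀) from s
  have hnotmem : (x₀, g x₀) ∉ s := fun hmem => lt_irrefl _ hmem.2
  obtain ⟨φ, hφ⟩ := geometric_hahn_banach_open_point hsconv hsopen hnotmem
  set β := φ (0, 1) with hβ
  have hβneg : β < 0 := by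
    have h1 : ((x₀ : E), g x₀ + 1) ∈ s := ⟨hx₀, show g x₀ < g x₀ + 1 by linarith⟩
    have := hφ _ h1
    have heq : ((x₀ : E), g x₀ + 1) = (x₀, g x₀) + (0, 1) := by simp
    rw [heq, map_add] at this
    simpa [hβ] using this
  -- φ (x, g x) ≤ φ (x₀, g x₀) for x ∈ Ω
  have hkey : ∀ x ∈ Ω, φ (x, g x) ≤ φ (x₀, g x₀) := by
    intro x hx
    refine le_of_forall_pos_lt_add fun ε hε => ?_
    have hmem : ((x : E), g x + ε / (-β)) ∈ s := ⟨hx, show g x < g x + ε / (-β) by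
      have : 0 < ε / (-β) := div_pos hε (by linarith)
      linarith⟩
    have := hφ _ hmem
    have heq : ((x : E), g x + ε / (-β)) = (x, g x) + (ε / (-β)) • ((0 : E), (1:ℝ)) := by
      simp [Prod.smul_mk]
    rw [heq, map_add, map_smul] at this
    have hβne : β ≠ 0 := ne_of_lt hβneg
    have : φ (x, g x) + (ε / (-β)) * β < φ (x₀, g x₀) := this
    have hβne' : (-β) ≠ 0 := by linarith
    have hcalc : (ε / (-β)) * β = -ε := by field_simp
    linarith [hcalc ▸ this]
  -- extract the linear part in x
  set L : E →L[ℝ] ℝ := φ.comp (ContinuousLinearMap.inl ℝ E ℝ) with hL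
  set v : E := (-β)⁻¹ • (InnerProductSpace.toDual ℝ E).symm L with hv
  refine ⟨v, fun x hx => ?_⟩
  have hsplit : ∀ (u : E) (t : ℝ), φ (u, t) = L u + t * β := by
    intro u t
    have : ((u : E), t) = (u, 0) + t • ((0:E), (1:ℝ)) := by simp [Prod.smul_mk]
    rw [this, map_add, map_smul]
    simp [hL, hβ, ContinuousLinearMap.comp_apply, mul_comm]
  have h1 := hkey x hx
  rw [hsplit x (g x), hsplit x₀ (g x₀)] at h1
  have hinner : ⟪v, x - x₀⟫ = (-β)⁻¹ * (L x - L x₀) := by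
    rw [hv, real_inner_smul_left, inner_sub_right]
    rw [InnerProductSpace.toDual_symm_apply, InnerProductSpace.toDual_symm_apply]
  rw [ge_iff_le, hinner]
  have hβpos : 0 < -β := by linarith
  have : (-β)⁻¹ * (L x - L x₀) ≤ g x - g x₀ := by
    rw [inv_mul_le_iff₀ hβpos]
    nlinarith [h1]
  linarith

/-- For Lipschitz f on an open convex bounded set, f admits a ρ-proximal subgradient at
every point (with the same ρ) iff x ↦ f(x) + (ρ/2)|x|² is convex. -/
theorem stmt_3 {n : ℕ} (Ω : Set (EuclideanSpace ℝ (Fin n))) (hΩo : IsOpen Ω)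
    (hΩc : Convex ℝ Ω) (hΩb : Bornology.IsBounded Ω)
    (f : EuclideanSpace ℝ (Fin n) → ℝ) (K : NNReal) (hf : LipschitzOnWith K f Ω)
    (ρ : ℝ) (hρ : 0 < ρ) :
    (∀ x₀ ∈ Ω, ∃ v : EuclideanSpace ℝ (Fin n), ∃ O ∈ nhds x₀, ∀ x ∈ O ∩ Ω,
        f x ≥ f x₀ + ⟪v, x - x₀⟫ - ρ / 2 * ‖x - x₀‖ ^ 2) ↔
      ConvexOn ℝ Ω (fun x => f x + ρ / 2 * ‖x‖ ^ 2) := by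
  set g : EuclideanSpace ℝ (Fin n) → ℝ := fun x => f x + ρ / 2 * ‖x‖ ^ 2 with hgdef
  have hgcont : ContinuousOn g Ω := by
    apply ContinuousOn.add (hf.continuousOn)
    exact (Continuous.continuousOn (by continuity))
  constructor
  · intro h
    apply localsub_convexOn hΩo hΩc hgcont
    intro z hz
    obtain ⟨v, O, hO, hsub⟩ := h z hz
    refine ⟨v + ρ • z, O, hO, fun x hx => ?_⟩
    have h1 := hsub x hx
    have e1 : ⟪v + ρ • z, x - z⟫ = ⟪v, x - z⟫ + ρ * ⟪z, x - z⟫ := by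
      rw [inner_add_left, real_inner_smul_left]
    have e2 : ⟪z, x - z⟫ = ⟪z, x⟫ - ‖z‖ ^ 2 := by
      rw [inner_sub_right, real_inner_self_eq_norm_sq]
    have e3 : ‖x - z‖ ^ 2 = ‖x‖ ^ 2 - 2 * ⟪x, z⟫ + ‖z‖ ^ 2 := norm_sub_sq_real x z
    have e4 : ⟪x, z⟫ = ⟪z, x⟫ := real_inner_comm z x
    simp only [hgdef, ge_iff_le]
    rw [e1, e2]
    rw [e3, e4] at h1
    nlinarith [h1]
  · intro hconv x₀ hx₀
    obtain ⟨v', hv'⟩ := convexOn_exists_subgradient hΩo hgcont hconv hx₀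
    refine ⟨v' - ρ • x₀, Set.univ, Filter.univ_mem, fun x hx => ?_⟩
    have h1 := hv' x hx.2
    have e1 : ⟪v' - ρ • x₀, x - x₀⟫ = ⟪v', x - x₀⟫ - ρ * ⟪x₀, x - x₀⟫ := by
      rw [inner_sub_left, real_inner_smul_left]
    have e2 : ⟪x₀, x - x₀⟫ = ⟪x₀, x⟫ - ‖x₀‖ ^ 2 := by
      rw [inner_sub_right, real_inner_self_eq_norm_sq]
    have e3 : ‖x - x₀‖ ^ 2 = ‖x‖ ^ 2 - 2 * ⟪x, x₀⟫ + ‖x₀‖ ^ 2 := norm_sub_sq_real x x₀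
    have e4 : ⟪x, x₀⟫ = ⟪x₀, x⟫ := real_inner_comm x₀ x
    simp only [hgdef, ge_iff_le] at h1 ⊢
    rw [e1, e2, e3, e4]
    nlinarith [h1]
end

section
/- Let f : Ω → ℝ be convex on an open convex set Ω ⊆ ℝⁿ and let x̄ ∈ Ω. If v is an extreme point of the subdifferential ∂f(x̄), then v belongs to the reachable gradient ∂*f(x̄), i.e. there exists a sequence xₖ → x̄ of differentiability points of f with ∇f(xₖ) → v. -/
open scoped RealInnerProductSpace Topology
open Filter Set

/-!
Convex functions are locally Lipschitz, so by Rademacher's theorem their differentiability points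
are dense, and the gradients there are subgradients which stay locally bounded. Hence the reachable
gradients at `x₀` form a compact subset `S` of `∂f(x₀)`. Given `w ∈ ∂f(x₀)` and a direction `u`,
approach `x₀` along `u` through differentiability points `y`: monotonicity of the subdifferential
gives `⟪∇f(y) - w, y - x₀⟫ ≥ 0`, and in the limit some `z ∈ S` has `⟪u, w⟫ ≤ ⟪u, z⟫`. By separation
`∂f(x₀) = conv S` (Clarke). In finite dimensions `conv S` is compact by Carathéodory's theorem, and
an extreme point of `conv S` lies in `S`.
-/

theorem ConvexOn.le_sub_of_hasFDerivAt {E : Type*} [NormedAddCommGroup E] [NormedSpace ℝ E]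
    {s : Set E} {f : E → ℝ} (hf : ConvexOn ℝ s f) {x y : E} (hx : x ∈ s) (hy : y ∈ s)
    {φ : E →L[ℝ] ℝ} (hφ : HasFDerivAt f φ x) : φ (y - x) ≤ f y - f x := by
  set g : ℝ →ᵃ[ℝ] E := AffineMap.lineMap x y
  have hfg : HasDerivAt (f ∘ g) (φ (y - x)) 0 := by
    simpa [g] using (show HasFDerivAt f φ (g 0) by simpa [g] using hφ).comp_hasDerivAt 0
      AffineMap.hasDerivAt_lineMap
  simpa [slope_def_field, g] using
    (hf.comp_affineMap g).le_slope_of_hasDerivAt (by simpa [g]) (by simpa [g]) one_pos hfg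

section Rademacher

variable {E F : Type*} [NormedAddCommGroup E] [NormedSpace ℝ E] [FiniteDimensional ℝ E]
  [NormedAddCommGroup F] [NormedSpace ℝ F] [FiniteDimensional ℝ F]

theorem LocallyLipschitzOn.subset_closure_differentiableAt {f : E → F} {s : Set E}
    (hs : IsOpen s) (hf : LocallyLipschitzOn s f) :
    s ⊆ closure {x ∈ s | DifferentiableAt ℝ f x} := by
  let _ : MeasurableSpace E := borel E
  have _ : BorelSpace E := ⟨rfl⟩
  intro x hx
  obtain ⟨K, t, ht, hK⟩ := hf hx
  rw [hs.nhdsWithin_eq hx] at ht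
  have hdense : Dense {y | y ∈ interior t → DifferentiableAt ℝ f y} :=
    MeasureTheory.Measure.dense_of_ae (μ := (Module.Basis.ofVectorSpace ℝ E).addHaar) <| by
      filter_upwards [(hK.mono interior_subset).ae_differentiableWithinAt_of_mem] with y hy hyt
      exact (hy hyt).differentiableAt (isOpen_interior.mem_nhds hyt)
  refine closure_mono ?_ <| hdense.open_subset_closure_inter (isOpen_interior.inter hs)
    ⟨mem_interior_iff_mem_nhds.2 ht, hx⟩
  rintro y ⟨⟨hyt, hys⟩, hy⟩
  exact ⟨hys, hy hyt⟩

end Rademacher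

section CompactConvexHull

variable {E : Type*} [TopologicalSpace E] [AddCommGroup E] [Module ℝ E] [ContinuousAdd E]
  [ContinuousSMul ℝ E] [FiniteDimensional ℝ E]

theorem IsCompact.convexHull {s : Set E} (hs : IsCompact s) : IsCompact (convexHull ℝ s) := by
  rcases s.eq_empty_or_nonempty with rfl | ⟨x₀, hx₀⟩
  · simp
  set N := Module.finrank ℝ E + 1
  -- Carathéodory: every point of the hull is a convex combination of `N` points of `s`.
  suffices h : _root_.convexHull ℝ s = (fun p : (Fin N → ℝ) × (Fin N → E) => ∑ i, p.1 i • p.2 i) ''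
      (stdSimplex ℝ (Fin N) ×ˢ univ.pi fun _ => s) by
    rw [h]
    exact ((isCompact_stdSimplex ℝ _).prod (isCompact_univ_pi fun _ => hs)).image (by fun_prop)
  refine Subset.antisymm (fun x hx => ?_) ?_
  · obtain ⟨ι, _, z, w, hzs, hz, hw0, hw1, rfl⟩ := eq_pos_convex_span_of_mem_convexHull hx
    obtain ⟨e⟩ : Nonempty (ι ↪ Fin N) := Function.Embedding.nonempty_of_card_le <| by
      simpa using hz.card_le_finrank_succ.trans (by simpa [N] using Submodule.finrank_le _)
    have hw_out : ∀ i ∉ range e, Function.extend e w 0 i = 0 := fun i hi =>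
      Function.extend_apply' w (0 : Fin N → ℝ) i hi
    refine ⟨(Function.extend e w 0, Function.extend e z fun _ => x₀),
      ⟨⟨fun i => ?_, ?_⟩, fun i _ => ?_⟩, ?_⟩
    · by_cases hi : i ∈ range e
      · obtain ⟨j, rfl⟩ := hi
        simpa [e.injective.extend_apply] using (hw0 j).le
      · simp [hw_out i hi]
    · rw [← hw1]
      exact (Fintype.sum_of_injective e e.injective _ _ hw_out
        fun j => (e.injective.extend_apply w 0 j).symm).symm
    · by_cases hi : i ∈ range e
      · obtain ⟨j, rfl⟩ := hi
        simpa [e.injective.extend_apply] using hzs (mem_range_self j)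
      · simpa [Function.extend_apply' z _ i hi] using hx₀
    · refine (Fintype.sum_of_injective e e.injective _ _ (fun i hi => ?_) fun j => ?_).symm
      · simp [hw_out i hi]
      · simp [e.injective.extend_apply]
  · rintro _ ⟨⟨w, p⟩, ⟨hw, hp⟩, rfl⟩
    exact (convex_convexHull ℝ s).sum_mem (fun i _ => hw.1 i) hw.2
      fun i _ => subset_convexHull ℝ s (hp i trivial)

end CompactConvexHull

theorem exists_seq_pos_smul_mem_tendsto {E : Type*} [NormedAddCommGroup E] [NormedSpace ℝ E]
    {Ω D : Set E} (hΩ : IsOpen Ω) (hD : Ω ⊆ closure D) {x₀ : E} (hx₀ : x₀ ∈ Ω) (u : E) :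
    ∃ (t : ℕ → ℝ) (e : ℕ → E), (∀ k, 0 < t k ∧ x₀ + t k • e k ∈ D) ∧
      Tendsto t atTop (𝓝 0) ∧ Tendsto e atTop (𝓝 u) := by
  set T : Set (ℝ × E) := {p | 0 < p.1 ∧ x₀ + p.1 • p.2 ∈ D}
  have hnear : ∀ᶠ t in 𝓝[>] (0 : ℝ), (t, u) ∈ closure T := by
    have hΩ' : ∀ᶠ t in 𝓝 (0 : ℝ), x₀ + t • u ∈ Ω :=
      (Continuous.tendsto (by fun_prop) 0).eventually (hΩ.mem_nhds (by simpa using hx₀))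
    filter_upwards [nhdsWithin_le_nhds hΩ', self_mem_nhdsWithin] with t ht (htpos : 0 < t)
    simpa [htpos.ne'] using map_mem_closure (f := fun y => (t, t⁻¹ • (y - x₀))) (t := T)
      (by fun_prop) (hD ht) fun y hy => ⟨htpos, by simpa [htpos.ne'] using hy⟩
  have h0 : ((0 : ℝ), u) ∈ closure T := by
    have hlim : Tendsto (fun t : ℝ => (t, u)) (𝓝[>] 0) (𝓝 (0, u)) :=
      (continuous_id.prodMk continuous_const).continuousWithinAt.tendsto
    simpa using mem_closure_of_tendsto hlim hnear
  obtain ⟨p, hpT, hp⟩ := mem_closure_iff_seq_limit.1 h0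
  exact ⟨fun k => (p k).1, fun k => (p k).2, hpT, hp.fst_nhds, hp.snd_nhds⟩

theorem LocallyLipschitzOn.exists_eventually_norm_gradient_le {E : Type*} [NormedAddCommGroup E]
    [InnerProductSpace ℝ E] [CompleteSpace E] {f : E → ℝ} {s : Set E} {x₀ : E}
    (hf : LocallyLipschitzOn s f) (hs : s ∈ 𝓝 x₀) : ∃ K : ℝ, ∀ᶠ y in 𝓝 x₀, ‖gradient f y‖ ≤ K := by
  obtain ⟨K, t, ht, hK⟩ := hf (mem_of_mem_nhds hs)
  rw [nhdsWithin_eq_nhds.2 hs] at ht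
  refine ⟨K, ?_⟩
  filter_upwards [eventually_mem_nhds_iff.2 ht] with y hy
  by_cases hd : DifferentiableAt ℝ f y
  · rw [gradient, LinearIsometryEquiv.norm_map]
    exact hd.hasFDerivAt.le_of_lipschitzOn hy hK
  · simp [gradient_eq_zero_of_not_differentiableAt hd]

section Subdifferential

variable {E : Type*} [NormedAddCommGroup E] [InnerProductSpace ℝ E]

def subdifferential (Ω : Set E) (f : E → ℝ) (x₀ : E) : Set E :=
  {w | ∀ x ∈ Ω, f x - f x₀ ≥ ⟪w, x - x₀⟫}

def reachableGradient [CompleteSpace E] (Ω : Set E) (f : E → ℝ) (x₀ : E) : Set E :=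
  {z | (x₀, z) ∈ closure ((fun x => (x, gradient f x)) '' {x ∈ Ω | DifferentiableAt ℝ f x})}

variable {Ω : Set E} {f : E → ℝ} {x₀ : E}

theorem convex_subdifferential : Convex ℝ (subdifferential Ω f x₀) := by
  intro w₁ hw₁ w₂ hw₂ a b ha hb hab x hx
  have h₁ := hw₁ x hx
  have h₂ := hw₂ x hx
  calc ⟪a • w₁ + b • w₂, x - x₀⟫ = a * ⟪w₁, x - x₀⟫ + b * ⟪w₂, x - x₀⟫ := by
        rw [inner_add_left, real_inner_smul_left, real_inner_smul_left]
    _ ≤ a * (f x - f x₀) + b * (f x - f x₀) := by gcongr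
    _ = f x - f x₀ := by rw [← add_mul, hab, one_mul]

theorem inner_sub_sub_nonneg_of_mem_subdifferential {x y v w : E} (hx : x ∈ Ω) (hy : y ∈ Ω)
    (hv : v ∈ subdifferential Ω f x) (hw : w ∈ subdifferential Ω f y) :
    0 ≤ ⟪v - w, x - y⟫ := by
  have h₁ := hv y hy
  have h₂ := hw x hx
  rw [← neg_sub x y, inner_neg_right] at h₁
  rw [inner_sub_left]
  linarith

variable [CompleteSpace E]

theorem ConvexOn.gradient_mem_subdifferential (hf : ConvexOn ℝ Ω f) (hx : x₀ ∈ Ω)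
    (hd : DifferentiableAt ℝ f x₀) : gradient f x₀ ∈ subdifferential Ω f x₀ := fun x hx' => by
  rw [gradient, InnerProductSpace.toDual_symm_apply]
  exact hf.le_sub_of_hasFDerivAt hx hx' hd.hasFDerivAt

theorem mem_reachableGradient_iff {z : E} :
    z ∈ reachableGradient Ω f x₀ ↔ ∃ xs : ℕ → E, (∀ k, xs k ∈ Ω ∧ DifferentiableAt ℝ f (xs k)) ∧
      Tendsto xs atTop (𝓝 x₀) ∧ Tendsto (fun k => gradient f (xs k)) atTop (𝓝 z) := by
  refine mem_closure_iff_seq_limit.trans ⟨fun ⟨p, hp, hlim⟩ => ?_, fun ⟨xs, hxs, h₁, h₂⟩ =>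
    ⟨fun k => (xs k, gradient f (xs k)), fun k => mem_image_of_mem _ (hxs k), h₁.prodMk_nhds h₂⟩⟩
  choose xs hxs hp using hp
  obtain rfl : p = fun k => (xs k, gradient f (xs k)) := funext fun k => (hp k).symm
  exact ⟨xs, hxs, hlim.fst_nhds, hlim.snd_nhds⟩

theorem isClosed_reachableGradient : IsClosed (reachableGradient Ω f x₀) :=
  isClosed_closure.preimage (continuous_const.prodMk continuous_id)

variable [FiniteDimensional ℝ E]

theorem ConvexOn.reachableGradient_subset_subdifferential (hΩ : IsOpen Ω) (hf : ConvexOn ℝ Ω f)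
    (hx₀ : x₀ ∈ Ω) : reachableGradient Ω f x₀ ⊆ subdifferential Ω f x₀ := by
  intro z hz x hx
  obtain ⟨xs, hxs, hlim, hgrad⟩ := mem_reachableGradient_iff.1 hz
  have hfx₀ : Tendsto (fun k => f (xs k)) atTop (𝓝 (f x₀)) :=
    ((hf.continuousOn hΩ).continuousAt (hΩ.mem_nhds hx₀)).tendsto.comp hlim
  exact le_of_tendsto_of_tendsto' (hgrad.inner (tendsto_const_nhds.sub hlim))
    (tendsto_const_nhds.sub hfx₀) fun k =>
    hf.gradient_mem_subdifferential (hxs k).1 (hxs k).2 x hx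

theorem ConvexOn.isCompact_reachableGradient (hΩ : IsOpen Ω) (hf : ConvexOn ℝ Ω f)
    (hx₀ : x₀ ∈ Ω) : IsCompact (reachableGradient Ω f x₀) := by
  obtain ⟨K, hK⟩ := (hf.locallyLipschitzOn hΩ).exists_eventually_norm_gradient_le (hΩ.mem_nhds hx₀)
  refine Metric.isCompact_of_isClosed_isBounded isClosed_reachableGradient <|
    (Metric.isBounded_closedBall (x := 0) (r := K)).subset fun z hz => ?_
  obtain ⟨xs, -, hlim, hgrad⟩ := mem_reachableGradient_iff.1 hz
  exact mem_closedBall_zero_iff.2 <| le_of_tendsto hgrad.norm (hlim.eventually hK)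

theorem ConvexOn.exists_mem_reachableGradient_inner_le (hΩ : IsOpen Ω) (hf : ConvexOn ℝ Ω f)
    (hx₀ : x₀ ∈ Ω) {w : E} (hw : w ∈ subdifferential Ω f x₀) (u : E) :
    ∃ z ∈ reachableGradient Ω f x₀, ⟪u, w⟫ ≤ ⟪u, z⟫ := by
  have hlip := hf.locallyLipschitzOn hΩ
  obtain ⟨t, e, hte, ht, he⟩ :=
    exists_seq_pos_smul_mem_tendsto hΩ (hlip.subset_closure_differentiableAt hΩ) hx₀ u
  set y : ℕ → E := fun k => x₀ + t k • e k
  have hy : Tendsto y atTop (𝓝 x₀) := by simpa using tendsto_const_nhds.add (ht.smul he)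
  obtain ⟨K, hK⟩ := hlip.exists_eventually_norm_gradient_le (hΩ.mem_nhds hx₀)
  obtain ⟨z, -, φ, hφ, hz⟩ := tendsto_subseq_of_frequently_bounded
    (Metric.isBounded_closedBall (x := (0 : E)) (r := K))
    ((hy.eventually hK).mono fun k hk => mem_closedBall_zero_iff.2 hk).frequently
  refine ⟨z, mem_reachableGradient_iff.2
    ⟨y ∘ φ, fun k => (hte (φ k)).2, hy.comp hφ.tendsto_atTop, hz⟩, ?_⟩
  have hmono : ∀ k, 0 ≤ ⟪gradient f (y k) - w, e k⟫ := fun k => by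
    have h := inner_sub_sub_nonneg_of_mem_subdifferential (hte k).2.1 hx₀
      (hf.gradient_mem_subdifferential (hte k).2.1 (hte k).2.2) hw
    rw [show y k - x₀ = t k • e k by simp [y], real_inner_smul_right] at h
    exact (mul_nonneg_iff_of_pos_left (hte k).1).1 h
  have hlim : 0 ≤ ⟪z - w, u⟫ := ge_of_tendsto'
    ((hz.sub tendsto_const_nhds).inner (he.comp hφ.tendsto_atTop)) fun k => hmono (φ k)
  rw [inner_sub_left, real_inner_comm u z, real_inner_comm u w] at hlim
  linarith

theorem ConvexOn.subdifferential_eq_convexHull_reachableGradient (hΩ : IsOpen Ω)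
    (hf : ConvexOn ℝ Ω f) (hx₀ : x₀ ∈ Ω) :
    subdifferential Ω f x₀ = convexHull ℝ (reachableGradient Ω f x₀) := by
  refine Subset.antisymm (fun w hw => ?_)
    (convexHull_min (hf.reachableGradient_subset_subdifferential hΩ hx₀) convex_subdifferential)
  rw [← iInter_halfSpaces_eq (convex_convexHull ℝ _)
    (hf.isCompact_reachableGradient hΩ hx₀).convexHull.isClosed]
  refine mem_iInter.2 fun l => ?_
  obtain ⟨z, hz, hle⟩ :=
    hf.exists_mem_reachableGradient_inner_le hΩ hx₀ hw ((InnerProductSpace.toDual ℝ E).symm l)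
  exact ⟨z, subset_convexHull ℝ _ hz, by simpa only [InnerProductSpace.toDual_symm_apply] using hle⟩

end Subdifferential

theorem stmt_9_general {n : ℕ} (Ω : Set (EuclideanSpace ℝ (Fin n))) (hΩo : IsOpen Ω)
    (f : EuclideanSpace ℝ (Fin n) → ℝ) (hf : ConvexOn ℝ Ω f)
    (x₀ : EuclideanSpace ℝ (Fin n)) (hx : x₀ ∈ Ω) (v : EuclideanSpace ℝ (Fin n))
    (hv : v ∈ Set.extremePoints ℝ
      {w : EuclideanSpace ℝ (Fin n) | ∀ x ∈ Ω, f x - f x₀ ≥ ⟪w, x - x₀⟫}) :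
    ∃ xs : ℕ → EuclideanSpace ℝ (Fin n),
      (∀ k, xs k ∈ Ω ∧ DifferentiableAt ℝ f (xs k)) ∧
      Tendsto xs atTop (nhds x₀) ∧
      Tendsto (fun k => gradient f (xs k)) atTop (nhds v) := by
  refine mem_reachableGradient_iff.1 <| extremePoints_convexHull_subset (𝕜 := ℝ) ?_
  rwa [← hf.subdifferential_eq_convexHull_reachableGradient hΩo hx]

/-- Every extreme point of the subdifferential of a convex function belongs to the
reachable gradient. -/
theorem stmt_9 {n : ℕ} (Ω : Set (EuclideanSpace ℝ (Fin n))) (hΩo : IsOpen Ω)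
    (hΩc : Convex ℝ Ω) (f : EuclideanSpace ℝ (Fin n) → ℝ) (hf : ConvexOn ℝ Ω f)
    (x₀ : EuclideanSpace ℝ (Fin n)) (hx : x₀ ∈ Ω) (v : EuclideanSpace ℝ (Fin n))
    (hv : v ∈ Set.extremePoints ℝ
      {w : EuclideanSpace ℝ (Fin n) | ∀ x ∈ Ω, f x - f x₀ ≥ ⟪w, x - x₀⟫}) :
    ∃ xs : ℕ → EuclideanSpace ℝ (Fin n),
      (∀ k, xs k ∈ Ω ∧ DifferentiableAt ℝ f (xs k)) ∧
      Tendsto xs atTop (nhds x₀) ∧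
      Tendsto (fun k => gradient f (xs k)) atTop (nhds v) :=
  stmt_9_general Ω hΩo f hf x₀ hx v hv
end

section
/- Let f : Ω → ℝ be convex on an open convex set Ω ⊆ ℝⁿ and suppose f is differentiable at x̄ ∈ Ω. Then f is strictly (strongly) differentiable at x̄: for every ε > 0 there is δ > 0 such that |f(y) − f(x) − ∇f(x̄)·(y−x)| ≤ ε|y−x| whenever x, y ∈ B(x̄, δ). -/
open scoped RealInnerProductSpace

/-- A convex function differentiable at x₀ is strictly (strongly) differentiable at x₀. -/
theorem stmt_12 {n : ℕ} (Ω : Set (EuclideanSpace ℝ (Fin n))) (hΩo : IsOpen Ω)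
    (hΩc : Convex ℝ Ω) (f : EuclideanSpace ℝ (Fin n) → ℝ) (hf : ConvexOn ℝ Ω f)
    (x₀ : EuclideanSpace ℝ (Fin n)) (hx : x₀ ∈ Ω) (hdiff : DifferentiableAt ℝ f x₀) :
    ∀ ε : ℝ, 0 < ε → ∃ δ : ℝ, 0 < δ ∧ Metric.ball x₀ δ ⊆ Ω ∧
      ∀ x ∈ Metric.ball x₀ δ, ∀ y ∈ Metric.ball x₀ δ,
        |f y - f x - ⟪gradient f x₀, y - x⟫| ≤ ε * ‖y - x‖ := by
  intro ε hε
  set g := gradient f x₀ with hgdef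
  have hgrad : HasGradientAt f g x₀ := hdiff.hasGradientAt
  have hF : HasFDerivAt f ((InnerProductSpace.toDual ℝ _) g) x₀ :=
    hasGradientAt_iff_hasFDerivAt.mp hgrad
  -- subgradient inequality
  have key : ∀ z ∈ Ω, (0:ℝ) ≤ f z - f x₀ - ⟪g, z - x₀⟫ := by
    intro z hz
    rcases eq_or_ne z x₀ with rfl | hne
    · simp
    set A : ℝ →ᵃ[ℝ] EuclideanSpace ℝ (Fin n) := AffineMap.lineMap x₀ z with hA
    have hsub : Set.Icc (0:ℝ) 1 ⊆ A ⁻¹' Ω := by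
      intro t ht
      have : A t ∈ segment ℝ x₀ z := by
        rw [segment_eq_image_lineMap]
        exact ⟨t, ht, rfl⟩
      exact hΩc.segment_subset hx hz this
    have hconv : ConvexOn ℝ (Set.Icc (0:ℝ) 1) (f ∘ A) :=
      (hf.comp_affineMap A).subset hsub (convex_Icc 0 1)
    have h1 : HasDerivAt (fun t : ℝ => A t) (z - x₀) 0 := by
      have h1' : HasDerivAt (fun t : ℝ => t • (z - x₀) + x₀) (z - x₀) 0 := by
        simpa using ((hasDerivAt_id (0:ℝ)).smul_const (z - x₀)).add_const x₀
      apply h1'.congr_of_eventuallyEq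
      filter_upwards with t
      simp only [hA, AffineMap.lineMap_apply_module]
      module
    have h2 : HasDerivAt (f ∘ A) (⟪g, z - x₀⟫) 0 := by
      have hF' : HasFDerivAt f ((InnerProductSpace.toDual ℝ _) g) ((fun t : ℝ => A t) 0) := by
        simpa [hA] using hF
      have := hF'.comp_hasDerivAt (0:ℝ) h1
      simpa using this
    have hslope := hconv.le_slope_of_hasDerivAt (by simp) (by simp)
      zero_lt_one h2
    have hA1 : A 1 = z := by simp [hA]
    have hA0 : A 0 = x₀ := by simp [hA]
    rw [slope_def_field] at hslope
    simp only [Function.comp_apply, hA0, hA1] at hslope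
    have : ⟪g, z - x₀⟫ ≤ f z - f x₀ := by
      have := hslope
      field_simp at this
      linarith
    linarith
  -- little-o estimate
  have ho : ∀ᶠ z in nhds x₀, z ∈ Ω ∧ f z - f x₀ - ⟪g, z - x₀⟫ ≤ ε / 2 * ‖z - x₀‖ := by
    have h1 : ∀ᶠ z in nhds x₀, z ∈ Ω := hΩo.mem_nhds hx
    have h2 := hF.isLittleO.def (half_pos hε)
    filter_upwards [h1, h2] with z hz1 hz2
    refine ⟨hz1, ?_⟩
    have : |f z - f x₀ - ⟪g, z - x₀⟫| ≤ ε / 2 * ‖z - x₀‖ := by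
      simpa [Real.norm_eq_abs] using hz2
    exact le_trans (le_abs_self _) this
  rw [Metric.eventually_nhds_iff] at ho
  obtain ⟨r, hr, hball⟩ := ho
  have hballΩ : Metric.ball x₀ r ⊆ Ω := fun z hz => (hball (by simpa [dist_eq_norm] using hz)).1
  refine ⟨r / 2, by positivity, fun z hz =>
    hballΩ (Metric.ball_subset_ball (by linarith) hz), ?_⟩
  -- main one-sided estimate
  have main : ∀ x ∈ Metric.ball x₀ (r/2), ∀ y ∈ Metric.ball x₀ (r/2),
      f y - f x - ⟪g, y - x⟫ ≤ ε * ‖y - x‖ := by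
    intro x hx1 y hy1
    rcases eq_or_ne y x with rfl | hne
    · simp
    have hd : 0 < ‖y - x‖ := norm_pos_iff.mpr (sub_ne_zero.mpr hne)
    set d := ‖y - x‖ with hddef
    set k := r / (2 * d) with hkdef
    have hk : 0 < k := by positivity
    set z := y + k • (y - x) with hzdef
    have hzball : z ∈ Metric.ball x₀ r := by
      rw [Metric.mem_ball, dist_eq_norm]
      have : z - x₀ = (y - x₀) + k • (y - x) := by rw [hzdef]; module
      rw [this]
      have h1 : ‖y - x₀‖ < r / 2 := by
        have := hy1; rwa [Metric.mem_ball, dist_eq_norm] at this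
      have h2 : ‖k • (y - x)‖ = k * d := by
        rw [norm_smul, Real.norm_eq_abs, abs_of_pos hk]
      have h3 : k * d = r / 2 := by
        rw [hkdef]; field_simp
      calc ‖(y - x₀) + k • (y - x)‖ ≤ ‖y - x₀‖ + ‖k • (y - x)‖ := norm_add_le _ _
        _ < r / 2 + r / 2 := by rw [h2, h3]; linarith
        _ = r := by ring
    have hxΩ : x ∈ Ω := hballΩ (Metric.ball_subset_ball (by linarith) hx1)
    have hzΩ : z ∈ Ω := hballΩ hzball
    set t := 1 / (1 + k) with htdef
    have h1k : 0 < 1 + k := by linarith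
    have ht0 : 0 < t := by positivity
    have ht1 : t ≤ 1 := by
      rw [htdef, div_le_one h1k]; linarith
    have hyeq : y = (1 - t) • x + t • z := by
      have hz : z - x = (1 + k) • (y - x) := by rw [hzdef]; module
      have : t • (z - x) = y - x := by
        rw [hz, smul_smul]
        have : t * (1 + k) = 1 := by rw [htdef]; field_simp
        rw [this, one_smul]
      have h2 : (1 - t) • x + t • z = x + t • (z - x) := by module
      rw [h2, this]; module
    have hcvx : f y ≤ (1 - t) * f x + t * f z := by
      have := hf.2 hxΩ hzΩ (by linarith : (0:ℝ) ≤ 1 - t) ht0.le (by ring)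
      rw [← hyeq] at this
      simpa [smul_eq_mul] using this
    have hinner : ⟪g, y - x₀⟫ = (1 - t) * ⟪g, x - x₀⟫ + t * ⟪g, z - x₀⟫ := by
      have : y - x₀ = (1 - t) • (x - x₀) + t • (z - x₀) := by
        rw [hyeq]; module
      rw [this, inner_add_right, real_inner_smul_right, real_inner_smul_right]
    have hhx : (0:ℝ) ≤ f x - f x₀ - ⟪g, x - x₀⟫ := key x hxΩ
    have hhz : f z - f x₀ - ⟪g, z - x₀⟫ ≤ ε / 2 * r := by
      have h1 := (hball (by simpa [dist_eq_norm] using hzball)).2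
      have h2 : ‖z - x₀‖ ≤ r := by
        have := hzball; rw [Metric.mem_ball, dist_eq_norm] at this; linarith
      nlinarith [half_pos hε]
    have hinner2 : ⟪g, y - x⟫ = ⟪g, y - x₀⟫ - ⟪g, x - x₀⟫ := by
      rw [← inner_sub_right]; congr 1; module
    -- combine
    have hstep : f y - f x₀ - ⟪g, y - x₀⟫ - (f x - f x₀ - ⟪g, x - x₀⟫)
        ≤ t * (f z - f x₀ - ⟪g, z - x₀⟫) := by
      nlinarith [hcvx, hinner, hhx]
    have htb : t ≤ 2 * d / r := by
      have h1 : t ≤ 1 / k := by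
        rw [htdef]
        apply one_div_le_one_div_of_le hk
        linarith
      have h2 : (1:ℝ) / k = 2 * d / r := by rw [hkdef, one_div_div]
      linarith [h1, h2.le]
    have : f y - f x - ⟪g, y - x⟫ ≤ t * (ε / 2 * r) := by
      have h3 : t * (f z - f x₀ - ⟪g, z - x₀⟫) ≤ t * (ε / 2 * r) :=
        mul_le_mul_of_nonneg_left hhz ht0.le
      rw [hinner2]
      linarith
    calc f y - f x - ⟪g, y - x⟫ ≤ t * (ε / 2 * r) := this
      _ ≤ (2 * d / r) * (ε / 2 * r) := by
          apply mul_le_mul_of_nonneg_right htb; positivity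
      _ = ε * d := by
          have h4 : (2:ℝ) * d / r * (ε / 2 * r) = ε * d * (r / r) := by ring
          rw [h4, div_self (ne_of_gt hr), mul_one]
  intro x hx1 y hy1
  rw [abs_le]
  constructor
  · have := main y hy1 x hx1
    have hrev : ⟪g, x - y⟫ = -⟪g, y - x⟫ := by
      rw [← inner_neg_right]; congr 1; module
    rw [hrev, norm_sub_rev x y] at this
    linarith
  · exact main x hx1 y hy1
end

section
/- Let f : Ω → ℝ be convex on an open convex set Ω ⊆ ℝⁿ. Then for every nonnegative test function φ ∈ C_c^∞(Ω) and every constant positive semidefinite symmetric matrix (a^{ij}), the distributional second derivative satisfies Σ_{i,j} a^{ij} ∫ f ∂ᵢ∂ⱼφ dx ≥ 0. -/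
open MeasureTheory Metric


private lemma continuous_glue {α : Type*} [TopologicalSpace α] {g : α → ℝ} {U : Set α}
    (hU : IsOpen U) (hg : ContinuousOn g U) (hsupp : tsupport g ⊆ U) : Continuous g :=
  continuous_of_tsupport fun _x hx => hg.continuousAt (hU.mem_nhds (hsupp hx))

private lemma core {n : ℕ} {Ω : Set (EuclideanSpace ℝ (Fin n))} (hΩo : IsOpen Ω)
    {f : EuclideanSpace ℝ (Fin n) → ℝ} (hf : ConvexOn ℝ Ω f)
    {φ : EuclideanSpace ℝ (Fin n) → ℝ} (hφ : ContDiff ℝ (⊤ : ℕ∞) φ)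
    (hφc : HasCompactSupport φ) (hφΩ : tsupport φ ⊆ Ω) (hφpos : ∀ x, 0 ≤ φ x)
    (v : EuclideanSpace ℝ (Fin n)) :
    0 ≤ ∫ x in Ω, f x * fderiv ℝ (fun y => fderiv ℝ φ y v) x v := by
  classical
  set K : Set (EuclideanSpace ℝ (Fin n)) := tsupport φ with hKdef
  obtain ⟨δ, hδ0, hδΩ⟩ := hφc.exists_cthickening_subset_open hΩo hφΩ
  set K' : Set (EuclideanSpace ℝ (Fin n)) := cthickening δ K with hK'def
  have hK' : IsCompact K' := hφc.cthickening
  have hKK' : K ⊆ K' := self_subset_cthickening K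
  have hK'Ω : K' ⊆ Ω := hδΩ
  have hK'closed : IsClosed K' := isClosed_cthickening
  have hfc : ContinuousOn f Ω := hf.continuousOn hΩo
  set F : EuclideanSpace ℝ (Fin n) → ℝ := fun y => fderiv ℝ φ y v with hFdef
  set G : EuclideanSpace ℝ (Fin n) → ℝ := fun x => fderiv ℝ F x v with hGdef
  have hφd : Differentiable ℝ φ := hφ.differentiable (by simp)
  have hF : ContDiff ℝ (⊤ : ℕ∞) F := (hφ.fderiv_right (by simp)).clm_apply contDiff_const
  have hFd : Differentiable ℝ F := hF.differentiable (by simp)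
  have hG : Continuous G := ((hF.fderiv_right (m := (⊤ : ℕ∞)) (by simp)).clm_apply contDiff_const).continuous
  have hFs : tsupport F ⊆ K := by
    refine (closure_mono ?_).trans (tsupport_fderiv_subset ℝ (f := φ))
    intro y hy
    simp only [Function.mem_support, hFdef] at hy ⊢
    intro h0; exact hy (by rw [h0]; rfl)
  have hGs : tsupport G ⊆ K := by
    refine le_trans (closure_mono ?_) ((tsupport_fderiv_subset ℝ (f := F)).trans hFs)
    intro y hy
    simp only [Function.mem_support, hGdef] at hy ⊢
    intro h0; exact hy (by rw [h0]; rfl)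
  -- integrability helper
  have mk : ∀ (g : EuclideanSpace ℝ (Fin n) → ℝ) (U : Set (EuclideanSpace ℝ (Fin n))), IsOpen U → ContinuousOn g U → tsupport g ⊆ K' →
      tsupport g ⊆ U → Integrable g := by
    intro g U hUo hg h1 h2
    exact (continuous_glue hUo hg h2).integrable_of_hasCompactSupport
      (hK'.of_isClosed_subset (isClosed_tsupport g) h1)
  have mkΩ : ∀ g : EuclideanSpace ℝ (Fin n) → ℝ, Function.support g ⊆ Ω → ∫ x in Ω, g x = ∫ x, g x := by
    intro g hs
    rw [← integral_indicator hΩo.measurableSet, Set.indicator_eq_self.mpr hs]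
  -- the function f * G, its integral J, and the constant C
  have hgGsupp : Function.support (fun x => f x * G x) ⊆ K' := fun x hx => by
    have : G x ≠ 0 := fun h0 => by simp [h0] at hx
    exact hKK' (hGs (subset_tsupport G this))
  have hgGts : tsupport (fun x => f x * G x) ⊆ K' :=
    closure_minimal hgGsupp hK'closed
  have igG : Integrable (fun x => f x * G x) :=
    mk _ Ω hΩo (hfc.mul hG.continuousOn) hgGts (hgGts.trans hK'Ω)
  set J : ℝ := ∫ x, f x * G x with hJdef
  have hJeq : ∫ x in Ω, f x * G x = J := mkΩ _ (hgGsupp.trans hK'Ω)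
  have hfK' : IntegrableOn (fun x => |f x|) K' := ((hfc.mono hK'Ω).integrableOn_compact hK').abs
  set C : ℝ := ∫ x in K', |f x| with hCdef
  have hC0 : 0 ≤ C := integral_nonneg fun x => abs_nonneg _
  -- main estimate
  have main : ∀ ε : ℝ, 0 < ε → -(ε * C) ≤ J := by
    intro ε hε
    have hGu : UniformContinuous G :=
      hG.uniformContinuous_of_tendsto_cocompact
        (HasCompactSupport.is_zero_at_infty (hφc.of_isClosed_subset (isClosed_tsupport G) hGs))
    obtain ⟨δ₁, hδ₁0, hδ₁⟩ := Metric.uniformContinuous_iff.mp hGu ε hε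
    set h : ℝ := min (δ / (‖v‖ + 1)) (δ₁ / (2 * (‖v‖ + 1))) with hhdef
    have hv1 : (0:ℝ) ≤ ‖v‖ := norm_nonneg v
    have hh0 : 0 < h := lt_min (by positivity) (by positivity)
    have hhδ : h * ‖v‖ ≤ δ := by
      calc h * ‖v‖ ≤ δ / (‖v‖ + 1) * ‖v‖ :=
            mul_le_mul_of_nonneg_right (min_le_left _ _) hv1
        _ ≤ δ := by rw [div_mul_eq_mul_div, div_le_iff₀ (by positivity)]; nlinarith
    have hhδ₁ : h * ‖v‖ < δ₁ := by
      calc h * ‖v‖ ≤ δ₁ / (2 * (‖v‖ + 1)) * ‖v‖ :=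
            mul_le_mul_of_nonneg_right (min_le_right _ _) hv1
        _ < δ₁ := by rw [div_mul_eq_mul_div, div_lt_iff₀ (by positivity)]; nlinarith
    set w : EuclideanSpace ℝ (Fin n) := h • v with hwdef
    have hwnorm : ‖w‖ ≤ δ := by
      rw [hwdef, norm_smul, Real.norm_eq_abs, abs_of_pos hh0]; exact hhδ
    set Δ : EuclideanSpace ℝ (Fin n) → ℝ := fun x => φ (x + w) - 2 * φ x + φ (x - w) with hΔdef
    have hGdist : ∀ (x : EuclideanSpace ℝ (Fin n)) (s : ℝ), |s| ≤ h → |G (x + s • v) - G x| ≤ ε := by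
      intro x s hs
      have hd : dist (x + s • v) x < δ₁ := by
        rw [dist_eq_norm, add_sub_cancel_left, norm_smul, Real.norm_eq_abs]
        calc |s| * ‖v‖ ≤ h * ‖v‖ := mul_le_mul_of_nonneg_right hs hv1
          _ < δ₁ := hhδ₁
      have := hδ₁ hd
      rw [Real.dist_eq] at this
      exact this.le
    have hline : ∀ (x : EuclideanSpace ℝ (Fin n)) (t : ℝ),
        HasDerivAt (fun t : ℝ => x + t • v) v t := by
      intro x t
      simpa using ((hasDerivAt_id t).smul_const v).const_add x
    have hψ : ∀ (x : EuclideanSpace ℝ (Fin n)) (t : ℝ),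
        HasDerivAt (fun t : ℝ => φ (x + t • v)) (F (x + t • v)) t := fun x t =>
      (hφd _).hasFDerivAt.comp_hasDerivAt t (hline x t)
    have hχ : ∀ (x : EuclideanSpace ℝ (Fin n)) (t : ℝ),
        HasDerivAt (fun t : ℝ => F (x + t • v)) (G (x + t • v)) t := fun x t =>
      (hFd _).hasFDerivAt.comp_hasDerivAt t (hline x t)
    have contFt : ∀ x : EuclideanSpace ℝ (Fin n), Continuous fun t : ℝ => F (x + t • v) :=
      fun x => hF.continuous.comp (continuous_const.add (continuous_id.smul continuous_const))
    have contGt : ∀ x : EuclideanSpace ℝ (Fin n), Continuous fun t : ℝ => G (x + t • v) :=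
      fun x => hG.comp (continuous_const.add (continuous_id.smul continuous_const))
    have key : ∀ x, |Δ x - h ^ 2 * G x| ≤ ε * h ^ 2 := by
      intro x
      have e1 : ∫ t in (0:ℝ)..h, F (x + t • v) = φ (x + w) - φ x := by
        have := intervalIntegral.integral_eq_sub_of_hasDerivAt (f := fun t : ℝ => φ (x + t • v))
          (fun t _ => hψ x t) ((contFt x).intervalIntegrable 0 h)
        simpa [hwdef] using this
      have e2 : ∫ t in (-h)..(0:ℝ), F (x + t • v) = φ x - φ (x - w) := by
        have := intervalIntegral.integral_eq_sub_of_hasDerivAt (f := fun t : ℝ => φ (x + t • v))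
          (fun t _ => hψ x t) ((contFt x).intervalIntegrable (-h) 0)
        simpa [hwdef, sub_eq_add_neg] using this
      have e4 : ∫ t in (0:ℝ)..h, F (x + (t - h) • v) = ∫ t in (-h)..(0:ℝ), F (x + t • v) := by
        simpa using intervalIntegral.integral_comp_sub_right (a := (0:ℝ)) (b := h)
          (fun t => F (x + t • v)) h
      have contFt' : Continuous fun t : ℝ => F (x + (t - h) • v) :=
        (contFt x).comp (continuous_sub_right h)
      have e5 : Δ x = ∫ t in (0:ℝ)..h, (F (x + t • v) - F (x + (t - h) • v)) := by
        rw [intervalIntegral.integral_sub ((contFt x).intervalIntegrable 0 h)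
          (contFt'.intervalIntegrable 0 h), e4, e1, e2, hΔdef]
        ring
      have e6 : Δ x - h ^ 2 * G x = ∫ t in (0:ℝ)..h,
          (F (x + t • v) - F (x + (t - h) • v) - h * G x) := by
        rw [intervalIntegral.integral_sub (f := fun t => F (x + t • v) - F (x + (t - h) • v)) (((contFt x).sub contFt').intervalIntegrable 0 h)
          intervalIntegrable_const, intervalIntegral.integral_const, ← e5]
        simp only [smul_eq_mul, sub_zero]
        ring
      have bound : ∀ t ∈ Set.uIoc (0:ℝ) h,
          ‖F (x + t • v) - F (x + (t - h) • v) - h * G x‖ ≤ ε * h := by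
        intro t ht
        rw [Set.uIoc_of_le hh0.le] at ht
        have e3 : F (x + t • v) - F (x + (t - h) • v) = ∫ s in (t - h)..t, G (x + s • v) :=
          (intervalIntegral.integral_eq_sub_of_hasDerivAt (fun s _ => hχ x s)
            ((contGt x).intervalIntegrable _ _)).symm
        have e3' : h * G x = ∫ s in (t - h)..t, G x := by
          rw [intervalIntegral.integral_const, sub_sub_cancel, smul_eq_mul]
        rw [e3, e3', ← intervalIntegral.integral_sub ((contGt x).intervalIntegrable _ _)
          intervalIntegrable_const]
        have hb : ∀ s ∈ Set.uIoc (t - h) t, ‖G (x + s • v) - G x‖ ≤ ε := by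
          intro s hs
          rw [Set.uIoc_of_le (by linarith : t - h ≤ t)] at hs
          have hs' : |s| ≤ h := abs_le.2 ⟨by linarith [hs.1, ht.1], by linarith [hs.2, ht.2]⟩
          simpa [Real.norm_eq_abs] using hGdist x s hs'
        calc ‖∫ s in (t - h)..t, (G (x + s • v) - G x)‖ ≤ ε * |t - (t - h)| :=
              intervalIntegral.norm_integral_le_of_norm_le_const hb
          _ = ε * h := by rw [sub_sub_cancel, abs_of_pos hh0]
      rw [e6, ← Real.norm_eq_abs]
      calc ‖∫ t in (0:ℝ)..h, (F (x + t • v) - F (x + (t - h) • v) - h * G x)‖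
          ≤ ε * h * |h - 0| := intervalIntegral.norm_integral_le_of_norm_le_const bound
        _ = ε * h ^ 2 := by rw [sub_zero, abs_of_pos hh0]; ring
    -- membership facts
    have memK' : ∀ (x : EuclideanSpace ℝ (Fin n)) (s : ℝ), |s| ≤ h → x + s • v ∈ K → x ∈ K' := by
      intro x s hs hx
      apply mem_cthickening_of_dist_le x (x + s • v) δ K hx
      rw [dist_eq_norm, show x - (x + s • v) = (-s) • v from by module, norm_smul,
        Real.norm_eq_abs, abs_neg]
      calc |s| * ‖v‖ ≤ h * ‖v‖ := mul_le_mul_of_nonneg_right hs hv1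
        _ ≤ δ := hhδ
    have memΩ : ∀ x ∈ K, ∀ s : ℝ, |s| ≤ h → x + s • v ∈ Ω := by
      intro x hx s hs
      apply hK'Ω
      apply mem_cthickening_of_dist_le (x + s • v) x δ K hx
      rw [dist_eq_norm, add_sub_cancel_left, norm_smul, Real.norm_eq_abs]
      calc |s| * ‖v‖ ≤ h * ‖v‖ := mul_le_mul_of_nonneg_right hs hv1
        _ ≤ δ := hhδ
    have habsh : |h| ≤ h := by rw [abs_of_pos hh0]
    have habsnh : |(-h)| ≤ h := by rw [abs_neg, abs_of_pos hh0]
    have hxw : ∀ x : EuclideanSpace ℝ (Fin n), x + w = x + h • v := fun x => by rw [hwdef]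
    have hxmw : ∀ x : EuclideanSpace ℝ (Fin n), x - w = x + (-h) • v := fun x => by
      rw [hwdef]; module
    -- support of Δ
    have hΔsupp : Function.support Δ ⊆ K' := by
      intro x hx
      by_contra hxK'
      apply hx
      have h1 : φ (x + w) = 0 := by
        apply image_eq_zero_of_notMem_tsupport
        intro hc; rw [hxw] at hc; exact hxK' (memK' x h habsh hc)
      have h2 : φ (x - w) = 0 := by
        apply image_eq_zero_of_notMem_tsupport
        intro hc; rw [hxmw] at hc; exact hxK' (memK' x (-h) habsnh hc)
      have h3 : φ x = 0 := by
        apply image_eq_zero_of_notMem_tsupport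
        intro hc; exact hxK' (hKK' hc)
      simp only [hΔdef, h1, h2, h3]; ring
    have hΔc : Continuous Δ := by
      rw [hΔdef]
      exact ((hφ.continuous.comp (continuous_add_right w)).sub
          (continuous_const.mul hφ.continuous)).add
        (hφ.continuous.comp (continuous_sub_right w))
    have suppMul : ∀ g : EuclideanSpace ℝ (Fin n) → ℝ,
        Function.support (fun x => f x * g x) ⊆ Function.support g := by
      intro g x hx h0
      exact hx (by simp [h0])
    -- integrable functions
    have igΔ : Integrable (fun x => f x * Δ x) := by
      have hts : tsupport (fun x => f x * Δ x) ⊆ K' :=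
        closure_minimal ((suppMul Δ).trans hΔsupp) hK'closed
      exact mk _ Ω hΩo (hfc.mul hΔc.continuousOn) hts (hts.trans hK'Ω)
    have ig0 : Integrable (fun x => f x * φ x) := by
      have hts : tsupport (fun x => f x * φ x) ⊆ K' :=
        closure_minimal ((suppMul φ).trans ((subset_tsupport φ).trans hKK')) hK'closed
      exact mk _ Ω hΩo (hfc.mul hφ.continuous.continuousOn) hts (hts.trans hK'Ω)
    have igp : Integrable (fun x => f x * φ (x + w)) := by
      have hsupp : Function.support (fun x => f x * φ (x + w)) ⊆ K' := by
        refine (suppMul _).trans fun x hx => ?_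
        have hc : x + w ∈ K := subset_tsupport φ hx
        rw [hxw] at hc; exact memK' x h habsh hc
      exact mk _ Ω hΩo (hfc.mul (hφ.continuous.comp (continuous_add_right w)).continuousOn)
        (closure_minimal hsupp hK'closed) ((closure_minimal hsupp hK'closed).trans hK'Ω)
    have igm : Integrable (fun x => f x * φ (x - w)) := by
      have hsupp : Function.support (fun x => f x * φ (x - w)) ⊆ K' := by
        refine (suppMul _).trans fun x hx => ?_
        have hc : x - w ∈ K := subset_tsupport φ hx
        rw [hxmw] at hc; exact memK' x (-h) habsnh hc
      exact mk _ Ω hΩo (hfc.mul (hφ.continuous.comp (continuous_sub_right w)).continuousOn)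
        (closure_minimal hsupp hK'closed) ((closure_minimal hsupp hK'closed).trans hK'Ω)
    have hKsubm : K ⊆ (fun x => x - w) ⁻¹' Ω := by
      intro x hx
      have := memΩ x hx (-h) habsnh
      rw [← hxmw] at this; exact this
    have hKsubp : K ⊆ (fun x => x + w) ⁻¹' Ω := by
      intro x hx
      have := memΩ x hx h habsh
      rw [← hxw] at this; exact this
    have itp : Integrable (fun x => f (x - w) * φ x) := by
      have hts : tsupport (fun x => f (x - w) * φ x) ⊆ K := by
        refine closure_minimal (fun x hx => subset_tsupport φ (Function.mem_support.2
          fun h0 => Function.mem_support.1 hx (by simp [h0]))) (isClosed_tsupport φ)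
      refine mk _ ((fun x => x - w) ⁻¹' Ω) (hΩo.preimage (continuous_sub_right w))
        (ContinuousOn.mul (hfc.comp (continuous_sub_right w).continuousOn fun x hx => hx)
          hφ.continuous.continuousOn) (hts.trans hKK') (hts.trans hKsubm)
    have itm : Integrable (fun x => f (x + w) * φ x) := by
      have hts : tsupport (fun x => f (x + w) * φ x) ⊆ K := by
        refine closure_minimal (fun x hx => subset_tsupport φ (Function.mem_support.2
          fun h0 => Function.mem_support.1 hx (by simp [h0]))) (isClosed_tsupport φ)
      refine mk _ ((fun x => x + w) ⁻¹' Ω) (hΩo.preimage (continuous_add_right w))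
        (ContinuousOn.mul (hfc.comp (continuous_add_right w).continuousOn fun x hx => hx)
          hφ.continuous.continuousOn) (hts.trans hKK') (hts.trans hKsubp)
    -- translation invariance
    have htrans1 : ∫ x, f x * φ (x + w) = ∫ x, f (x - w) * φ x := by
      have := integral_add_right_eq_self (μ := volume) (fun y => f (y - w) * φ y) w
      simpa using this
    have htrans2 : ∫ x, f x * φ (x - w) = ∫ x, f (x + w) * φ x := by
      have := integral_sub_right_eq_self (μ := volume) (fun y => f (y + w) * φ y) w
      simpa using this
    -- split the integral of f * Δ
    have hsplit : ∫ x, f x * Δ x =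
        ((∫ x, f x * φ (x + w)) - 2 * ∫ x, f x * φ x) + ∫ x, f x * φ (x - w) := by
      have heq : (fun x => f x * Δ x) =
          fun x => (f x * φ (x + w) - 2 * (f x * φ x)) + f x * φ (x - w) := by
        funext x; simp only [hΔdef]; ring
      have A1 : ∫ x, (f x * φ (x + w) - 2 * (f x * φ x) + f x * φ (x - w)) =
          (∫ x, (f x * φ (x + w) - 2 * (f x * φ x))) + ∫ x, f x * φ (x - w) :=
        integral_add (igp.sub (ig0.const_mul 2)) igm
      have A2 : ∫ x, (f x * φ (x + w) - 2 * (f x * φ x)) =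
          (∫ x, f x * φ (x + w)) - ∫ x, 2 * (f x * φ x) :=
        integral_sub igp (ig0.const_mul 2)
      have A3 : ∫ x, 2 * (f x * φ x) = 2 * ∫ x, f x * φ x := integral_const_mul 2 _
      rw [heq, A1, A2, A3]
    have hcomb : ((∫ x, f (x - w) * φ x) - 2 * ∫ x, f x * φ x) + ∫ x, f (x + w) * φ x =
        ∫ x, (f (x - w) - 2 * f x + f (x + w)) * φ x := by
      have heq : (fun x => (f (x - w) - 2 * f x + f (x + w)) * φ x) =
          fun x => (f (x - w) * φ x - 2 * (f x * φ x)) + f (x + w) * φ x := by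
        funext x; ring
      have A1 : ∫ x, (f (x - w) * φ x - 2 * (f x * φ x) + f (x + w) * φ x) =
          (∫ x, (f (x - w) * φ x - 2 * (f x * φ x))) + ∫ x, f (x + w) * φ x :=
        integral_add (itp.sub (ig0.const_mul 2)) itm
      have A2 : ∫ x, (f (x - w) * φ x - 2 * (f x * φ x)) =
          (∫ x, f (x - w) * φ x) - ∫ x, 2 * (f x * φ x) :=
        integral_sub itp (ig0.const_mul 2)
      have A3 : ∫ x, 2 * (f x * φ x) = 2 * ∫ x, f x * φ x := integral_const_mul 2 _
      rw [heq, A1, A2, A3]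
    -- nonnegativity of the second difference integral
    have hpos : 0 ≤ ∫ x, (f (x - w) - 2 * f x + f (x + w)) * φ x := by
      refine integral_nonneg fun x => ?_
      rcases eq_or_ne (φ x) 0 with h0 | h0
      · simp [h0]
      · have hxK : x ∈ K := subset_tsupport φ (Function.mem_support.2 h0)
        have hx1 : x - w ∈ Ω := hKsubm hxK
        have hx2 : x + w ∈ Ω := hKsubp hxK
        have hmid : (1/2 : ℝ) • (x - w) + (1/2 : ℝ) • (x + w) = x := by module
        have hcx := hf.2 hx1 hx2 (by norm_num : (0:ℝ) ≤ 1/2) (by norm_num : (0:ℝ) ≤ 1/2)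
          (by norm_num : (1/2 : ℝ) + 1/2 = 1)
        rw [hmid] at hcx
        simp only [smul_eq_mul] at hcx
        exact mul_nonneg (by linarith) (hφpos x)
    have hInonneg : 0 ≤ ∫ x, f x * Δ x := by
      rw [hsplit, htrans1, htrans2, hcomb]; exact hpos
    -- comparison between ∫ f Δ and h² J
    have igsub : Integrable (fun x => f x * Δ x - h ^ 2 * (f x * G x)) :=
      igΔ.sub (igG.const_mul _)
    have hbound : ∀ x, |f x * Δ x - h ^ 2 * (f x * G x)| ≤
        K'.indicator (fun x => |f x| * (ε * h ^ 2)) x := by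
      intro x
      by_cases hx : x ∈ K'
      · rw [Set.indicator_of_mem hx]
        rw [show f x * Δ x - h ^ 2 * (f x * G x) = f x * (Δ x - h ^ 2 * G x) from by ring,
          abs_mul]
        exact mul_le_mul_of_nonneg_left (key x) (abs_nonneg _)
      · rw [Set.indicator_of_notMem hx]
        have h1 : Δ x = 0 := by
          by_contra hc; exact hx (hΔsupp (Function.mem_support.2 hc))
        have h2 : G x = 0 := by
          by_contra hc; exact hx (hKK' (hGs (subset_tsupport G (Function.mem_support.2 hc))))
        simp [h1, h2]
    have hCι : Integrable (K'.indicator fun x => |f x| * (ε * h ^ 2)) := by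
      rw [integrable_indicator_iff hK'.measurableSet]
      exact hfK'.mul_const _
    have hest : |(∫ x, f x * Δ x) - h ^ 2 * J| ≤ C * (ε * h ^ 2) := by
      have hsplit2 : ∫ x, (f x * Δ x - h ^ 2 * (f x * G x)) = (∫ x, f x * Δ x) - h ^ 2 * J := by
        have B1 : ∫ x, (f x * Δ x - h ^ 2 * (f x * G x)) =
            (∫ x, f x * Δ x) - ∫ x, h ^ 2 * (f x * G x) :=
          integral_sub igΔ (igG.const_mul _)
        have B2 : ∫ x, h ^ 2 * (f x * G x) = h ^ 2 * ∫ x, f x * G x := integral_const_mul _ _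
        rw [B1, B2, hJdef]
      rw [← hsplit2]
      calc |∫ x, (f x * Δ x - h ^ 2 * (f x * G x))|
          ≤ ∫ x, |f x * Δ x - h ^ 2 * (f x * G x)| := by
            simpa [Real.norm_eq_abs] using
              norm_integral_le_integral_norm fun x => f x * Δ x - h ^ 2 * (f x * G x)
        _ ≤ ∫ x, K'.indicator (fun x => |f x| * (ε * h ^ 2)) x :=
            integral_mono igsub.abs hCι hbound
        _ = ∫ x in K', |f x| * (ε * h ^ 2) := integral_indicator hK'.measurableSet
        _ = C * (ε * h ^ 2) := by rw [hCdef, ← integral_mul_const]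
    -- conclude
    have h2 := (abs_le.mp hest).2
    have hq : 0 ≤ (J + ε * C) * h ^ 2 := by
      have h3 : (J + ε * C) * h ^ 2 = h ^ 2 * J + C * (ε * h ^ 2) := by ring
      rw [h3]; linarith
    have hh2 : (0:ℝ) < h ^ 2 := by positivity
    have := (mul_nonneg_iff_of_pos_right hh2).mp hq
    linarith
  -- conclude
  rw [hJeq]
  by_contra hJneg
  push_neg at hJneg
  have hC1 : 0 < C + 1 := by linarith
  have hε : 0 < -J / (C + 1) := div_pos (by linarith) hC1
  have h1 := main _ hε
  have h2 : -(-J / (C + 1) * C) = J * (C / (C + 1)) := by ring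
  rw [h2] at h1
  have h4 : C / (C + 1) < 1 := by rw [div_lt_one hC1]; linarith
  have h5 : 0 ≤ C / (C + 1) := by positivity
  nlinarith

private lemma testfun_contDiff {n : ℕ} {φ : EuclideanSpace ℝ (Fin n) → ℝ}
    (hφ : ContDiff ℝ (⊤ : ℕ∞) φ) (v : EuclideanSpace ℝ (Fin n)) :
    ContDiff ℝ (⊤ : ℕ∞) (fun y => fderiv ℝ φ y v) :=
  (hφ.fderiv_right (m := (⊤ : ℕ∞)) (by simp)).clm_apply contDiff_const

private lemma tsupport_dir {n : ℕ} (ψ : EuclideanSpace ℝ (Fin n) → ℝ)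
    (v : EuclideanSpace ℝ (Fin n)) :
    tsupport (fun y => fderiv ℝ ψ y v) ⊆ tsupport ψ := by
  refine (closure_mono ?_).trans (tsupport_fderiv_subset ℝ (f := ψ))
  intro y hy
  simp only [Function.mem_support] at hy ⊢
  intro h0; exact hy (by rw [h0]; rfl)

private lemma integrable_aux {n : ℕ} {Ω : Set (EuclideanSpace ℝ (Fin n))} (hΩo : IsOpen Ω)
    {f g : EuclideanSpace ℝ (Fin n) → ℝ} (hfc : ContinuousOn f Ω) (hg : Continuous g)
    {K : Set (EuclideanSpace ℝ (Fin n))} (hK : IsCompact K) (hKΩ : K ⊆ Ω)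
    (hgs : tsupport g ⊆ K) : Integrable (fun x => f x * g x) := by
  have hsupp : tsupport (fun x => f x * g x) ⊆ K :=
    closure_minimal (fun x hx => hgs (subset_tsupport g (Function.mem_support.2
      fun h0 => Function.mem_support.1 hx (by simp [h0])))) hK.isClosed
  exact (continuous_glue hΩo (hfc.mul hg.continuousOn)
    (hsupp.trans hKΩ)).integrable_of_hasCompactSupport
    (hK.of_isClosed_subset (isClosed_tsupport _) hsupp)

/-- Non-negativity of the distributional Hessian of a convex function contracted with a
constant positive semidefinite matrix: Σ a^{ij} ∫ f ∂ᵢ∂ⱼφ ≥ 0 for all nonnegative test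
functions φ. -/
theorem stmt_14 {n : ℕ} (Ω : Set (EuclideanSpace ℝ (Fin n))) (hΩo : IsOpen Ω)
    (hΩc : Convex ℝ Ω) (f : EuclideanSpace ℝ (Fin n) → ℝ) (hf : ConvexOn ℝ Ω f)
    (φ : EuclideanSpace ℝ (Fin n) → ℝ) (hφ : ContDiff ℝ (⊤ : ℕ∞) φ)
    (hφc : HasCompactSupport φ) (hφΩ : tsupport φ ⊆ Ω) (hφpos : ∀ x, 0 ≤ φ x)
    (a : Matrix (Fin n) (Fin n) ℝ) (ha : a.PosSemidef) :
    0 ≤ ∑ i, ∑ j, a i j *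
      ∫ x in Ω, f x *
        fderiv ℝ (fun y => fderiv ℝ φ y (EuclideanSpace.single j 1)) x
          (EuclideanSpace.single i 1) := by
  classical
  obtain ⟨B, hB⟩ : ∃ B : Matrix (Fin n) (Fin n) ℝ, a = star B * B := by
    open scoped MatrixOrder in exact CStarAlgebra.nonneg_iff_eq_star_mul_self.mp ha.nonneg
  have haij : ∀ i j, a i j = ∑ k, B k i * B k j := by
    intro i j
    rw [hB]
    simp [Matrix.mul_apply, Matrix.conjTranspose_apply, Matrix.star_eq_conjTranspose]
  set e : Fin n → EuclideanSpace ℝ (Fin n) := fun i => EuclideanSpace.single i 1 with hedef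
  set D : Fin n → Fin n → EuclideanSpace ℝ (Fin n) → ℝ := fun i j x =>
    fderiv ℝ (fun y => fderiv ℝ φ y (e j)) x (e i) with hDdef
  have hfc : ContinuousOn f Ω := hf.continuousOn hΩo
  have hDc : ∀ i j, Continuous (D i j) := fun i j =>
    ((testfun_contDiff hφ (e j)).fderiv_right (m := (⊤ : ℕ∞)) (by simp)).clm_apply contDiff_const
      |>.continuous
  have hDs : ∀ i j, tsupport (D i j) ⊆ tsupport φ := fun i j =>
    (tsupport_dir _ (e i)).trans (tsupport_dir φ (e j))
  have hDint : ∀ i j, IntegrableOn (fun x => f x * D i j x) Ω :=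
    fun i j => (integrable_aux hΩo hfc (hDc i j) hφc hφΩ (hDs i j)).integrableOn
  have hfd : ∀ j, Differentiable ℝ (fun y => fderiv ℝ φ y (e j)) := fun j =>
    (testfun_contDiff hφ (e j)).differentiable (by simp)
  -- swap sums
  have swap : ∀ X : Fin n → Fin n → Fin n → ℝ,
      (∑ i, ∑ j, ∑ k, X i j k) = ∑ k, ∑ i, ∑ j, X i j k := by
    intro X
    have h1 : ∀ i : Fin n, (∑ j, ∑ k, X i j k) = ∑ k, ∑ j, X i j k := fun i => Finset.sum_comm
    simp_rw [h1]
    exact Finset.sum_comm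
  have hgoal : (∑ i, ∑ j, a i j * ∫ x in Ω, f x * D i j x) =
      ∑ k, ∑ i, ∑ j, B k i * B k j * ∫ x in Ω, f x * D i j x := by
    simp_rw [haij, Finset.sum_mul]
    exact swap _
  rw [hgoal]
  refine Finset.sum_nonneg fun k _ => ?_
  set c : Fin n → ℝ := B k with hcdef
  set v : EuclideanSpace ℝ (Fin n) := ∑ i, c i • e i with hvdef
  -- pointwise identity for the contracted second derivative
  have claim1 : (fun y => fderiv ℝ φ y v) = fun y => ∑ j, c j • fderiv ℝ φ y (e j) := by
    funext y
    rw [hvdef, map_sum]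
    simp [smul_eq_mul]
  have hGv : ∀ x, fderiv ℝ (fun y => fderiv ℝ φ y v) x v =
      ∑ j, ∑ i, c j * (c i * D i j x) := by
    intro x
    conv_lhs => rw [claim1]
    rw [fderiv_fun_sum (A := fun j y => c j • fderiv ℝ φ y (e j)) fun j _ => ((hfd j) x).const_smul (c j)]
    rw [ContinuousLinearMap.sum_apply]
    refine Finset.sum_congr rfl fun j _ => ?_
    rw [fderiv_fun_const_smul ((hfd j) x) (c j), ContinuousLinearMap.smul_apply]
    rw [hvdef, map_sum]
    simp [smul_eq_mul, hDdef, Finset.mul_sum]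
  have hsum : ∑ i, ∑ j, B k i * B k j * ∫ x in Ω, f x * D i j x =
      ∫ x in Ω, f x * fderiv ℝ (fun y => fderiv ℝ φ y v) x v := by
    have step1 : ∀ i j, B k i * B k j * ∫ x in Ω, f x * D i j x =
        ∫ x in Ω, c j * (c i * (f x * D i j x)) := by
      intro i j
      rw [integral_const_mul, integral_const_mul, hcdef]
      ring
    simp_rw [step1]
    have step2 : ∀ i : Fin n, (∑ j, ∫ x in Ω, c j * (c i * (f x * D i j x))) =
        ∫ x in Ω, ∑ j, c j * (c i * (f x * D i j x)) :=
      fun i => (integral_finset_sum _ fun j _ =>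
        (((hDint i j).const_mul _).const_mul _)).symm
    simp_rw [step2]
    rw [← integral_finset_sum _ fun i (_ : i ∈ Finset.univ) =>
      integrable_finset_sum _ fun j _ => ((hDint i j).const_mul _).const_mul _]
    refine integral_congr_ae (Filter.Eventually.of_forall fun x => ?_)
    show (∑ i, ∑ j, c j * (c i * (f x * D i j x))) =
      f x * fderiv ℝ (fun y => fderiv ℝ φ y v) x v
    rw [hGv x, Finset.mul_sum]
    simp_rw [Finset.mul_sum]
    rw [Finset.sum_comm]
    exact Finset.sum_congr rfl fun i _ => Finset.sum_congr rfl fun j _ => by ring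
  rw [hsum]
  exact core hΩo hf hφ hφc hφΩ hφpos v
end
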